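/- arXiv:1701.06354 — 3 statements merged into one kernel-verified Lean document; each statement's English description precedes it below -/
import Mathlib

section
/- For every positive integer k, if p = 1/(k+1) and q = 1-p, then -1/log(1 - p·q^k) < e·(k+1), where log denotes the natural logarithm and e is Euler's number. -/
theorem neg_inv_log_lt (k : ℕ) (hk : 0 < k) (p q : ℝ)
    (hp : p = 1 / (k + 1)) (hq : q = 1 - p) :
    -1 / Real.log (1 - p * q ^ k) < Real.exp 1 * (k + 1) := by
  have hk1 : (0:ℝ) < k := by exact_mod_cast hk
  have hk1' : (0:ℝ) < k + 1 := by positivity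
  have hp0 : 0 < p := by rw [hp]; positivity
  have hp1 : p < 1 := by
    rw [hp]; rw [div_lt_one hk1']; linarith
  have hq0 : 0 < q := by rw [hq]; linarith
  have hq1 : q < 1 := by rw [hq]; linarith
  set x := p * q ^ k with hxdef
  have hx0 : 0 < x := by positivity
  have hx1 : x < 1 := by
    have hqk : q ^ k ≤ 1 := pow_le_one₀ hq0.le hq1.le
    calc x ≤ p * 1 := by
            exact mul_le_mul_of_nonneg_left hqk hp0.le
      _ = p := mul_one p
      _ < 1 := hp1
  have h1x : 0 < 1 - x := by linarith
  have hlog : Real.log (1 - x) ≤ -x := by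
    have := Real.log_le_sub_one_of_pos h1x
    linarith
  have hlogneg : Real.log (1 - x) < 0 := by linarith
  have step1 : -1 / Real.log (1 - x) ≤ 1 / x := by
    rw [neg_div, ← one_div_neg_eq_neg_one_div]
    exact one_div_le_one_div_of_le hx0 (by linarith)
  have hq_eq : q = k / (k + 1) := by
    rw [hq, hp]; field_simp; ring
  have hinv : 1 / x = (k + 1) * ((k + 1) / k) ^ k := by
    rw [hxdef, hp, hq_eq]
    rw [one_div, mul_inv, div_pow, ← div_pow]
    rw [one_div, inv_inv, ← inv_pow, inv_div]
  have hpow : ((k + 1) / (k:ℝ)) ^ k < Real.exp 1 := by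
    have h1 : ((k:ℝ) + 1) / k = 1 + 1 / k := by field_simp
    have h2 : 1 + 1 / (k:ℝ) < Real.exp (1 / k) := by
      have := Real.add_one_lt_exp (x := 1 / (k:ℝ)) (one_div_pos.mpr hk1).ne'
      linarith
    calc (((k:ℝ) + 1) / k) ^ k < Real.exp (1 / k) ^ k := by
          apply pow_lt_pow_left₀ (by rw [h1]; exact h2) (by positivity) hk.ne'
      _ = Real.exp 1 := by
          rw [← Real.exp_nat_mul]
          congr 1
          field_simp
  calc -1 / Real.log (1 - x) ≤ 1 / x := step1
    _ = (k + 1) * ((k + 1) / k) ^ k := hinv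
    _ < (k + 1) * Real.exp 1 := by
        exact mul_lt_mul_of_pos_left hpow hk1'
    _ = Real.exp 1 * (k + 1) := mul_comm _ _
end

section
/- Let N, k be positive integers, C > 0, ε ∈ (0,1). If ℓ ≥ e·(k+1)·(log(N/k) + log(1/ε) + log(1/C)) and p = 1/(k+1), q = 1-p, then N·(1-p·q^k)^ℓ ≤ C·k·ε. -/
theorem main_expectation_bound (N k : ℕ) (hN : 0 < N) (hk : 0 < k) (C ε : ℝ)
    (hC : 0 < C) (hε0 : 0 < ε) (hε1 : ε < 1) (ℓ : ℕ)
    (hℓ : (ℓ : ℝ) ≥ Real.exp 1 * (k + 1) *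
      (Real.log ((N : ℝ) / k) + Real.log (1 / ε) + Real.log (1 / C)))
    (p q : ℝ) (hp : p = 1 / (k + 1)) (hq : q = 1 - p) :
    (N : ℝ) * (1 - p * q ^ k) ^ ℓ ≤ C * k * ε := by
  have hk1 : (0:ℝ) < (k:ℝ) + 1 := by positivity
  have hkpos : (0:ℝ) < (k:ℝ):= by exact_mod_cast hk
  have hNpos : (0:ℝ) < (N:ℝ) := by exact_mod_cast hN
  have hp0 : 0 < p := by rw [hp]; positivity
  have hp1 : p ≤ 1 := by rw [hp, div_le_one hk1]; linarith
  have hqq : q = (k:ℝ) / ((k:ℝ)+1) := by rw [hq, hp]; field_simp; ring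
  have hqpos : 0 < q := by rw [hqq]; positivity
  have hq1 : q ≤ 1 := by rw [hq]; linarith
  have hqk0 : 0 < q ^ k := pow_pos hqpos k
  have hqk1 : q ^ k ≤ 1 := pow_le_one₀ hqpos.le hq1
  set x := p * q ^ k with hx
  have hx0 : 0 < x := mul_pos hp0 hqk0
  have hxle1 : x ≤ 1 := by
    calc x ≤ 1 * 1 := mul_le_mul hp1 hqk1 hqk0.le zero_le_one
    _ = 1 := one_mul 1
  have hE : (0:ℝ) < Real.exp 1 := Real.exp_pos 1
  -- key lower bound: e * (k+1) * x ≥ 1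
  have hexpq : 1 ≤ Real.exp 1 * q ^ k := by
    have h1 : (1 + 1/(k:ℝ)) ≤ Real.exp (1/(k:ℝ)) := by
      have := Real.add_one_le_exp (1/(k:ℝ)); linarith
    have hb : (0:ℝ) < 1 + 1/(k:ℝ) := by positivity
    have h2 : (1 + 1/(k:ℝ)) ^ k ≤ Real.exp 1 := by
      calc (1 + 1/(k:ℝ)) ^ k ≤ (Real.exp (1/(k:ℝ))) ^ k :=
            pow_le_pow_left₀ hb.le h1 k
        _ = Real.exp 1 := by
            rw [← Real.exp_nat_mul]; congr 1; field_simp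
    have hinv : q = (1 + 1/(k:ℝ))⁻¹ := by
      rw [hqq]; field_simp
    rw [hinv, inv_pow, ← div_eq_mul_inv, le_div_iff₀ (pow_pos hb k), one_mul]
    exact h2
  have hkey : 1 ≤ Real.exp 1 * ((k:ℝ)+1) * x := by
    have : Real.exp 1 * ((k:ℝ)+1) * x = Real.exp 1 * q ^ k := by
      rw [hx, hp]; field_simp
    rw [this]; exact hexpq
  set S := Real.log ((N : ℝ) / k) + Real.log (1 / ε) + Real.log (1 / C) with hS
  -- ℓ * x ≥ S
  have hlx : S ≤ (ℓ:ℝ) * x := by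
    rcases le_or_gt S 0 with h | h
    · have : (0:ℝ) ≤ (ℓ:ℝ) * x := by positivity
      linarith
    · have h1 : Real.exp 1 * ((k:ℝ)+1) * S * (1 / (Real.exp 1 * ((k:ℝ)+1))) ≤ (ℓ:ℝ) * x := by
        apply mul_le_mul hℓ _ (by positivity) (by positivity)
        rw [div_le_iff₀ (by positivity), mul_comm x]
        exact hkey
      have h2 : Real.exp 1 * ((k:ℝ)+1) * S * (1 / (Real.exp 1 * ((k:ℝ)+1))) = S := by
        field_simp
      rw [h2] at h1; exact h1
  -- (1-x)^ℓ ≤ exp(-ℓ x)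
  have hpow : (1 - x) ^ ℓ ≤ Real.exp (-((ℓ:ℝ) * x)) := by
    calc (1 - x) ^ ℓ ≤ (Real.exp (-x)) ^ ℓ := by
          apply pow_le_pow_left₀ (by linarith)
          have := Real.add_one_le_exp (-x); linarith
      _ = Real.exp (-((ℓ:ℝ) * x)) := by
          rw [← Real.exp_nat_mul]; congr 1; ring
  -- S = log (N / (k * ε * C))
  have hSeq : S = Real.log ((N:ℝ) / ((k:ℝ) * ε * C)) := by
    rw [hS, one_div, one_div, Real.log_inv, Real.log_inv,
        Real.log_div hNpos.ne' (by positivity : ((k:ℝ) * ε * C) ≠ 0),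
        Real.log_div hNpos.ne' hkpos.ne',
        Real.log_mul (by positivity) hC.ne', Real.log_mul hkpos.ne' hε0.ne']
    ring
  have hexpS : Real.exp (-((ℓ:ℝ) * x)) ≤ (k:ℝ) * ε * C / N := by
    have : Real.exp (-S) = (k:ℝ) * ε * C / N := by
      rw [hSeq, ← Real.log_inv, Real.exp_log (by positivity)]
      field_simp
    rw [← this]
    exact Real.exp_le_exp.mpr (by linarith)
  calc (N:ℝ) * (1 - x) ^ ℓ ≤ (N:ℝ) * ((k:ℝ) * ε * C / N) := by
        apply mul_le_mul_of_nonneg_left _ hNpos.le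
        exact hpow.trans hexpS
    _ = C * k * ε := by field_simp
end

section
/- For all positive integers N and k and all ε ∈ (0,1), if ℓ ≥ e·(k+1)·(log N + log(1/ε)) and p = 1/(k+1), q = 1-p, then N·(1-p·q^k)^ℓ ≤ ε. -/
theorem exact_recovery_expectation_bound (N k : ℕ) (hN : 0 < N) (hk : 0 < k)
    (ε : ℝ) (hε0 : 0 < ε) (hε1 : ε < 1) (ℓ : ℕ)
    (hℓ : (ℓ : ℝ) ≥ Real.exp 1 * (k + 1) * (Real.log N + Real.log (1 / ε)))
    (p q : ℝ) (hp : p = 1 / (k + 1)) (hq : q = 1 - p) :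
    (N : ℝ) * (1 - p * q ^ k) ^ ℓ ≤ ε := by
  have hkR : (0:ℝ) < (k:ℝ) := by exact_mod_cast hk
  have hk1 : (0:ℝ) < (k:ℝ) + 1 := by linarith
  have hp0 : 0 < p := by rw [hp]; positivity
  have hq' : q = (k:ℝ) / ((k:ℝ) + 1) := by
    rw [hq, hp]; field_simp; ring
  have hq0 : 0 < q := by rw [hq']; positivity
  have hq1 : q < 1 := by
    rw [hq']
    rw [div_lt_one hk1]; linarith
  -- q^k ≥ exp(-1)
  have hinv : (1:ℝ)/q = ((k:ℝ)+1)/(k:ℝ) := by rw [hq']; field_simp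
  have hlog : Real.log (1/q) ≤ 1/(k:ℝ) := by
    have h := Real.log_le_sub_one_of_pos (x := 1/q) (by positivity)
    have : (1:ℝ)/q - 1 = 1/(k:ℝ) := by rw [hinv]; field_simp; ring
    linarith
  have hqk : Real.exp (-1) ≤ q ^ k := by
    have h1 : (1/q) ^ k ≤ Real.exp 1 := by
      have h2 : (1/q) ^ k = Real.exp ((k:ℝ) * Real.log (1/q)) := by
        rw [← Real.log_pow, Real.exp_log (by positivity)]
      rw [h2]
      apply Real.exp_le_exp.mpr
      calc (k:ℝ) * Real.log (1/q) ≤ (k:ℝ) * (1/(k:ℝ)) :=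
            mul_le_mul_of_nonneg_left hlog (le_of_lt hkR)
        _ = 1 := by field_simp
    have hpow : (1/q)^k = 1/q^k := by rw [one_div, inv_pow, one_div]
    rw [hpow] at h1
    have hqk0 : 0 < q ^ k := by positivity
    have h2 : 1 ≤ Real.exp 1 * q ^ k := (div_le_iff₀ hqk0).mp h1
    rw [Real.exp_neg]
    rw [inv_le_iff_one_le_mul₀ (Real.exp_pos 1)]
    linarith [mul_comm (q ^ k) (Real.exp 1)]
  set c := p * q ^ k with hc
  have hc0 : 0 < c := by positivity
  have hclb : 1 / (Real.exp 1 * ((k:ℝ)+1)) ≤ c := by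
    have : 1 / (Real.exp 1 * ((k:ℝ)+1)) = (1/((k:ℝ)+1)) * Real.exp (-1) := by
      rw [Real.exp_neg]; field_simp
    rw [this, hc, hp]
    exact mul_le_mul_of_nonneg_left hqk (by positivity)
  have hc1 : c ≤ 1 := by
    have hqk1 : q ^ k ≤ 1 := pow_le_one₀ (le_of_lt hq0) (le_of_lt hq1)
    have hp1 : p ≤ 1 := by rw [hp]; rw [div_le_one hk1]; linarith
    calc c ≤ p * 1 := mul_le_mul_of_nonneg_left hqk1 (le_of_lt hp0)
      _ ≤ 1 := by linarith
  -- (1-c)^ℓ ≤ exp(-c*ℓ)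
  have hstep : (1 - c) ^ ℓ ≤ Real.exp (-(c * ℓ)) := by
    have h1 : 1 - c ≤ Real.exp (-c) := by
      have := Real.add_one_le_exp (-c); linarith
    calc (1 - c) ^ ℓ ≤ (Real.exp (-c)) ^ ℓ :=
          pow_le_pow_left₀ (by linarith) h1 ℓ
      _ = Real.exp (-(c * ℓ)) := by
          rw [← Real.exp_nat_mul]; ring_nf
  have hNR : (0:ℝ) < (N:ℝ) := by exact_mod_cast hN
  have hS : Real.log N + Real.log (1/ε) ≤ c * ℓ := by
    have he : (0:ℝ) < Real.exp 1 * ((k:ℝ)+1) := by positivity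
    have h1 : Real.log N + Real.log (1/ε) ≤ (ℓ:ℝ) / (Real.exp 1 * ((k:ℝ)+1)) := by
      rw [le_div_iff₀ he]; linarith [hℓ]
    have h2 : (ℓ:ℝ) / (Real.exp 1 * ((k:ℝ)+1)) = (ℓ:ℝ) * (1 / (Real.exp 1 * ((k:ℝ)+1))) := by
      ring
    calc Real.log N + Real.log (1/ε) ≤ (ℓ:ℝ) * (1 / (Real.exp 1 * ((k:ℝ)+1))) := by
          rw [← h2]; exact h1
      _ ≤ (ℓ:ℝ) * c := mul_le_mul_of_nonneg_left hclb (Nat.cast_nonneg ℓ)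
      _ = c * ℓ := mul_comm _ _
  have hfin : Real.exp (-(c * ℓ)) ≤ ε / N := by
    have : ε / N = Real.exp (-(Real.log N + Real.log (1/ε))) := by
      rw [neg_add, Real.exp_add, Real.exp_neg, Real.exp_neg,
        Real.exp_log hNR, Real.exp_log (by positivity : (0:ℝ) < 1/ε)]
      rw [one_div, inv_inv]; ring
    rw [this]
    exact Real.exp_le_exp.mpr (by linarith)
  calc (N:ℝ) * (1 - c) ^ ℓ ≤ (N:ℝ) * Real.exp (-(c * ℓ)) :=
        mul_le_mul_of_nonneg_left hstep (le_of_lt hNR)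
    _ ≤ (N:ℝ) * (ε / N) := mul_le_mul_of_nonneg_left hfin (le_of_lt hNR)
    _ = ε := by field_simp
end
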